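/- Let ρ: G → SL₂(ℂ) be a group homomorphism with A₀ = ρ(α₀) = diag(−e^{−πλ₀}, −e^{πλ₀}) and suppose B = ρ(β) = (b₁₁, b₁₂; −1, b₂₂) ∈ SL₂(ℂ) satisfies (BA₀)² = (A₀B)². If BA₀ ≠ A₀B and e^{−2πλ₀} ≠ 1, then (BA₀)² = −I. -/

import Mathlib

/-!
Write `A₀ = diag(a, d)`. The lower-left entries of `(BA₀)²` and `(A₀B)²` differ by
`B₁₀ (a - d) tr(BA₀)`, so `tr(BA₀) = 0` as soon as `A₀` is not scalar and `B₁₀ ≠ 0`.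
Since `det(BA₀) = 1`, Cayley–Hamilton `M² = tr M • M - det M • I` then gives `(BA₀)² = -I`.
-/

open Matrix

namespace Matrix

variable {R : Type*} [CommRing R]

theorem sq_fin_two_eq_trace_smul_sub_det_smul (M : Matrix (Fin 2) (Fin 2) R) :
    M ^ 2 = M.trace • M - M.det • (1 : Matrix (Fin 2) (Fin 2) R) := by
  ext i j
  fin_cases i <;> fin_cases j <;>
    simp [sq, mul_apply, trace_fin_two, det_fin_two, Fin.sum_univ_two] <;> ring

theorem sq_fin_two_eq_neg_one_of_trace_eq_zero {M : Matrix (Fin 2) (Fin 2) R}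
    (htr : M.trace = 0) (hdet : M.det = 1) : M ^ 2 = -1 := by
  rw [sq_fin_two_eq_trace_smul_sub_det_smul, htr, hdet, zero_smul, one_smul, zero_sub]

theorem mul_diag_sq_sub_diag_mul_sq_apply_one_zero (B : Matrix (Fin 2) (Fin 2) R) (a d : R) :
    ((B * !![a, 0; 0, d]) ^ 2 - (!![a, 0; 0, d] * B) ^ 2) 1 0 =
      B 1 0 * (a - d) * (B * !![a, 0; 0, d]).trace := by
  simp [sq, mul_apply, Fin.sum_univ_two, vecMul, dotProduct, trace_fin_two]
  ring

theorem trace_mul_diag_fin_two_eq_zero_of_sq_eq [NoZeroDivisors R] {a d : R} (had : a ≠ d)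
    {B : Matrix (Fin 2) (Fin 2) R} (hB : B 1 0 ≠ 0)
    (hsq : (B * !![a, 0; 0, d]) ^ 2 = (!![a, 0; 0, d] * B) ^ 2) :
    (B * !![a, 0; 0, d]).trace = 0 := by
  have h := mul_diag_sq_sub_diag_mul_sq_apply_one_zero B a d
  rw [hsq, sub_self, zero_apply, eq_comm, mul_eq_zero] at h
  exact h.resolve_left (mul_ne_zero hB (sub_ne_zero.mpr had))

end Matrix

open Complex in
theorem square_is_minus_one_general (l₀ : ℂ)
    (A₀ B : Matrix (Fin 2) (Fin 2) ℂ)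
    (hA₀ : A₀ = !![-exp (-(Real.pi * l₀)), 0; 0, -exp (Real.pi * l₀)])
    (hdetB : B.det = 1) (hB10 : B 1 0 = -1)
    (hsq : (B * A₀) ^ 2 = (A₀ * B) ^ 2)
    (hexp : exp (-(2 * Real.pi * l₀)) ≠ 1) :
    (B * A₀) ^ 2 = -1 := by
  have hprod : exp (-(Real.pi * l₀)) * exp (Real.pi * l₀) = 1 := by
    rw [← exp_add, neg_add_cancel, exp_zero]
  have hdiag : -exp (-(Real.pi * l₀)) ≠ -exp (Real.pi * l₀) := by
    rw [ne_eq, neg_inj]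
    contrapose! hexp
    calc exp (-(2 * Real.pi * l₀))
        = exp (-(Real.pi * l₀)) * exp (-(Real.pi * l₀)) := by rw [← exp_add]; ring_nf
      _ = 1 := by rw [← hprod, ← hexp]
  subst hA₀
  refine sq_fin_two_eq_neg_one_of_trace_eq_zero
    (trace_mul_diag_fin_two_eq_zero_of_sq_eq hdiag (by simp [hB10]) hsq) ?_
  rw [det_mul, hdetB, det_fin_two_of]
  linear_combination hprod

open Complex in
/-- If `ρ : G → SL₂(ℂ)` is a homomorphism with
`A₀ = ρ(α₀) = diag(−e^{−πλ₀}, −e^{πλ₀})` and `B = ρ(β) ∈ SL₂(ℂ)` has lower-left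
entry `−1` and satisfies `(BA₀)² = (A₀B)²`, `BA₀ ≠ A₀B`, `e^{−2πλ₀} ≠ 1`, then
`(BA₀)² = −I`. -/
theorem square_is_minus_one {G : Type*} [Group G]
    (ρ : G →* Matrix (Fin 2) (Fin 2) ℂ) (α₀ β : G) (l₀ : ℂ)
    (A₀ B : Matrix (Fin 2) (Fin 2) ℂ)
    (hA₀ρ : ρ α₀ = A₀) (hBρ : ρ β = B)
    (hA₀ : A₀ = !![-exp (-(Real.pi * l₀)), 0; 0, -exp (Real.pi * l₀)])
    (hdetB : B.det = 1) (hB10 : B 1 0 = -1)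
    (hsq : (B * A₀) ^ 2 = (A₀ * B) ^ 2)
    (hne : B * A₀ ≠ A₀ * B)
    (hexp : exp (-(2 * Real.pi * l₀)) ≠ 1) :
    (B * A₀) ^ 2 = -1 :=
  square_is_minus_one_general l₀ A₀ B hA₀ hdetB hB10 hsq hexp
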